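/- The Lobachevsky function Λ(θ) = −∫₀^θ log|2 sin t| dt is odd and periodic with period π: for all real θ, Λ(−θ) = −Λ(θ) and Λ(θ + π) = Λ(θ). -/

import Mathlib

/-!
`Λ` is odd because its integrand `log |2 sin t|` is even. The integrand is also `π`-periodic, so
`Λ(θ + π) - Λ(θ) = -∫₀^π log |2 sin t| dt = -(π log 2 + ∫₀^π log (sin t) dt)`, which vanishes by
the classical evaluation `∫₀^π log (sin t) dt = -π log 2`.
-/

open Real

/-- The Lobachevsky function `Λ(θ) = −∫₀^θ log|2 sin t| dt`. -/
noncomputable def lobachevsky (θ : ℝ) : ℝ :=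
  -∫ t in (0 : ℝ)..θ, Real.log |2 * Real.sin t|

open MeasureTheory intervalIntegral

theorem Function.Even.intervalIntegral_zero_neg {E : Type*} [NormedAddCommGroup E]
    [NormedSpace ℝ E] {f : ℝ → E} (hf : f.Even) (θ : ℝ) :
    ∫ t in (0 : ℝ)..-θ, f t = -∫ t in (0 : ℝ)..θ, f t := by
  calc ∫ t in (0 : ℝ)..-θ, f t = ∫ t in (0 : ℝ)..-θ, f (-t) :=
      (integral_congr fun t _ ↦ hf t).symm
    _ = ∫ t in θ..0, f t := by rw [integral_comp_neg, neg_neg, neg_zero]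
    _ = -∫ t in (0 : ℝ)..θ, f t := integral_symm _ _

lemma even_log_abs_two_mul_sin : Function.Even fun t ↦ log |2 * sin t| := fun t ↦ by
  simp only [sin_neg, mul_neg, abs_neg]

lemma periodic_log_abs_two_mul_sin : Function.Periodic (fun t ↦ log |2 * sin t|) π := fun t ↦ by
  simp only [sin_add_pi, mul_neg, abs_neg]

lemma intervalIntegrable_log_abs_two_mul_sin (a b : ℝ) :
    IntervalIntegrable (fun t ↦ log |2 * sin t|) volume a b :=
  (analyticOnNhd_const.mul analyticOnNhd_sin).meromorphicOn.intervalIntegrable_log_norm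

lemma integral_log_abs_two_mul_sin_zero_pi : ∫ t in (0 : ℝ)..π, log |2 * sin t| = 0 := by
  have h_split : ∀ t ∈ Set.Ioo 0 π, log |2 * sin t| = log 2 + log (sin t) := fun t ht ↦ by
    rw [log_abs, log_mul two_ne_zero (sin_pos_of_pos_of_lt_pi ht.1 ht.2).ne']
  have h_int : IntervalIntegrable (fun t ↦ log (sin t)) volume 0 π := intervalIntegrable_log_sin
  calc ∫ t in (0 : ℝ)..π, log |2 * sin t| = ∫ t in (0 : ℝ)..π, (log 2 + log (sin t)) := by
        simp only [integral_of_le pi_pos.le, integral_Ioc_eq_integral_Ioo]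
        exact setIntegral_congr_fun measurableSet_Ioo h_split
    _ = 0 := by
        rw [integral_add intervalIntegrable_const h_int, intervalIntegral.integral_const,
          integral_log_sin_zero_pi]
        simp only [sub_zero, smul_eq_mul]
        ring

/-- `Λ` is odd and `π`-periodic. -/
theorem lobachevsky_odd_periodic (θ : ℝ) :
    lobachevsky (-θ) = -lobachevsky θ ∧ lobachevsky (θ + π) = lobachevsky θ := by
  refine ⟨?_, ?_⟩
  · rw [lobachevsky, lobachevsky, even_log_abs_two_mul_sin.intervalIntegral_zero_neg]
  · rw [lobachevsky, lobachevsky, periodic_log_abs_two_mul_sin.intervalIntegral_add_eq_add 0 θ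
      intervalIntegrable_log_abs_two_mul_sin, zero_add, integral_log_abs_two_mul_sin_zero_pi,
      add_zero]
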